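/- arXiv:2101.12060 — 2 statements merged into one kernel-verified Lean document; each statement's English description precedes it below -/
import Mathlib

section
/- The ordered Bell numbers satisfy a(n) = ∑_{k=0}^{n−1} 2^k · A(n,k) for all n ≥ 1, where A(n,k) are the Eulerian numbers. -/
open Finset

/-- Stirling numbers of the second kind. -/
def stirling : ℕ → ℕ → ℕ
  | 0, 0 => 1
  | 0, _ + 1 => 0
  | _ + 1, 0 => 0
  | n + 1, k + 1 => (k + 1) * stirling n (k + 1) + stirling n k

/-- The ordered Bell (Fubini) numbers. -/
def fubini (n : ℕ) : ℕ := ∑ k ∈ Finset.range (n + 1), k.factorial * stirling n k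

/-- Eulerian numbers `A(n,k)`: permutations of `[n]` with `k` descents. -/
def eulerian : ℕ → ℕ → ℕ
  | 0, 0 => 1
  | 0, _ + 1 => 0
  | _ + 1, 0 => 1
  | n + 1, k + 1 => (n + 1 - (k + 1)) * eulerian n k + (k + 2) * eulerian n (k + 1)

/-- `L` is an ordered set partition of `Fin n`: a list of nonempty, pairwise
disjoint blocks whose union is everything. -/
def IsOSP {n : ℕ} (L : List (Finset (Fin n))) : Prop :=
  (∀ B ∈ L, B.Nonempty) ∧ L.Pairwise Disjoint ∧ ∀ x : Fin n, ∃ B ∈ L, x ∈ B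


/-! The identity `∑ₖ A(n,k) C(k,m) = (n-m)! S(n,n-m)`, whose right side counts ordered set partitions
of `[n]` into `n - m` blocks, follows by induction on `n` from the recurrences of `A` and `S`: Pascal's
rule for `C(k+1, m+1)` absorbs the Eulerian recurrence. Summing it over `m` turns `C(k,m)` into `2^k`
on the left and gives the Fubini number on the right. -/

lemma stirling_eq_zero_of_lt {n k : ℕ} (h : n < k) : stirling n k = 0 := by
  induction n generalizing k with
  | zero => obtain _ | k := k <;> first | omega | rfl
  | succ n ih =>
    obtain _ | k := k
    · omega
    · simp only [stirling, ih (by omega : n < k + 1), ih (by omega : n < k), mul_zero]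

lemma stirling_self (n : ℕ) : stirling n n = 1 := by
  induction n with
  | zero => rfl
  | succ n ih => simp only [stirling, ih, stirling_eq_zero_of_lt n.lt_succ_self, mul_zero]

lemma eulerian_eq_zero_of_le {n k : ℕ} (hn : 1 ≤ n) (h : n ≤ k) : eulerian n k = 0 := by
  induction n, hn using Nat.le_induction generalizing k with
  | base => obtain _ | k := k <;> first | omega | simp [eulerian]
  | succ n hn ih =>
    obtain _ | k := k
    · omega
    · simp only [eulerian, Nat.sub_eq_zero_of_le (by omega : n + 1 ≤ k + 1), ih (by omega : n ≤ k),
        ih (by omega : n ≤ k + 1), mul_zero, add_zero]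

lemma sum_range_succ_eulerian_mul {n : ℕ} (hn : 1 ≤ n) (f : ℕ → ℕ) :
    ∑ k ∈ range (n + 1), eulerian (n + 1) k * f k
      = ∑ k ∈ range n, eulerian n k * ((n - k) * f (k + 1) + (k + 1) * f k) := by
  set g : ℕ → ℕ := fun k => (k + 1) * eulerian n k * f k
  have hg0 : g 0 = f 0 := by obtain _ | n := n <;> simp [g, eulerian] at hn ⊢
  have hgn : g n = 0 := by simp [g, eulerian_eq_zero_of_le hn le_rfl]
  calc ∑ k ∈ range (n + 1), eulerian (n + 1) k * f k
      = ∑ k ∈ range n, (n - k) * eulerian n k * f (k + 1) + (∑ k ∈ range n, g (k + 1) + g 0) := by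
        rw [sum_range_succ', hg0, ← add_assoc, ← sum_add_distrib]
        simp only [eulerian, Nat.add_sub_add_right, g]
        congr 1
        · exact sum_congr rfl fun k _ => by ring
        · ring
    _ = ∑ k ∈ range n, (n - k) * eulerian n k * f (k + 1) + ∑ k ∈ range n, g k := by
        rw [← sum_range_succ', sum_range_succ, hgn, add_zero]
    _ = _ := by
        rw [← sum_add_distrib]
        exact sum_congr rfl fun k _ => by ring

lemma sub_mul_choose_succ_succ_add_succ_mul_choose {n k : ℕ} (hk : k < n) (m : ℕ) :
    (n - k) * (k + 1).choose (m + 1) + (k + 1) * k.choose (m + 1)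
      = (n - m) * (k.choose (m + 1) + k.choose m) := by
  rcases le_or_gt m k with hm | hm
  · have hpascal := Nat.choose_succ_succ k m
    have hstep := Nat.choose_succ_right_eq k m
    zify [hk.le, hm, hm.trans hk.le] at hpascal hstep ⊢
    linear_combination (↑n - ↑k : ℤ) * hpascal + hstep
  · simp [Nat.choose_eq_zero_of_lt hm, Nat.choose_eq_zero_of_lt (by omega : k < m + 1),
      Nat.choose_eq_zero_of_lt (by omega : k + 1 < m + 1)]

lemma succ_mul_factorial_mul_stirling_add (n j : ℕ) :
    (j + 1) * (j.factorial * stirling n j + (j + 1).factorial * stirling n (j + 1))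
      = (j + 1).factorial * stirling (n + 1) (j + 1) := by
  simp only [stirling, Nat.factorial_succ]
  ring

lemma sum_eulerian_mul_choose {n : ℕ} (hn : 1 ≤ n) (m : ℕ) :
    ∑ k ∈ range n, eulerian n k * k.choose m = (n - m).factorial * stirling n (n - m) := by
  induction n, hn using Nat.le_induction generalizing m with
  | base => obtain _ | m := m <;> simp [eulerian, stirling]
  | succ n hn ih =>
    rw [sum_range_succ_eulerian_mul hn]
    obtain _ | m := m
    · have hterm : ∀ k ∈ range n, eulerian n k * ((n - k) * (k + 1).choose 0 + (k + 1) * k.choose 0)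
          = (n + 1) * (eulerian n k * k.choose 0) := fun k hk => by
        have hkn := mem_range.1 hk
        rw [Nat.choose_zero_right, Nat.choose_zero_right, mul_one, mul_one, mul_one,
          (by omega : n - k + (k + 1) = n + 1), mul_comm]
      rw [sum_congr rfl hterm, ← mul_sum, ih, Nat.sub_zero, Nat.sub_zero, stirling_self, stirling_self,
        Nat.factorial_succ, mul_one, mul_one]
    · have hterm : ∀ k ∈ range n,
          eulerian n k * ((n - k) * (k + 1).choose (m + 1) + (k + 1) * k.choose (m + 1))
            = (n - m) * (eulerian n k * k.choose (m + 1) + eulerian n k * k.choose m) := fun k hk => by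
        rw [sub_mul_choose_succ_succ_add_succ_mul_choose (mem_range.1 hk)]
        ring
      rw [sum_congr rfl hterm, ← mul_sum, sum_add_distrib, ih, ih, Nat.add_sub_add_right]
      cases hj : n - m with
      | zero => simp [stirling]
      | succ j => rw [(by omega : n - (m + 1) = j), succ_mul_factorial_mul_stirling_add]

lemma sum_range_choose_of_le {k n : ℕ} (h : k ≤ n) : ∑ m ∈ range (n + 1), k.choose m = 2 ^ k := by
  rw [← Nat.sum_range_choose k]
  refine (sum_subset (range_subset_range.2 (by omega)) fun m _ hm => ?_).symm
  exact Nat.choose_eq_zero_of_lt (by simpa using hm)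

theorem fubini_eq_sum_eulerian (n : ℕ) (hn : 1 ≤ n) :
    fubini n = ∑ k ∈ Finset.range n, 2 ^ k * eulerian n k := by
  calc fubini n
      = ∑ m ∈ range (n + 1), (n - m).factorial * stirling n (n - m) := by
        rw [fubini, ← sum_range_reflect]; simp only [Nat.add_sub_cancel]
    _ = ∑ k ∈ range n, eulerian n k * ∑ m ∈ range (n + 1), k.choose m := by
        simp only [← sum_eulerian_mul_choose hn, mul_sum]; exact sum_comm
    _ = ∑ k ∈ range n, 2 ^ k * eulerian n k :=
        sum_congr rfl fun k hk => by
          rw [sum_range_choose_of_le (mem_range.1 hk).le, mul_comm]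
end

section
/- For n ≥ 2, ∑_{k=1}^{n-1} ∑ over compositions (a_1,…,a_k) of n with a_1 ≠ 1 of 4(k−1)·n!/(a_1!⋯a_k!) equals ∑_{k=1}^{n} 4·(k! − (k−1)!)·(k·S(n,k) − n·S(n−1,k−1)). -/
open Finset

/-!
Write `F(n, k) = k! S(n, k)`. The multinomial sum over compositions of `n` into `k` parts is
`F(n, k)`: splitting off the first part `a ≥ 1` reduces it to `∑ C(n, a) F(n - a, k - 1)`, and
this binomial convolution satisfies the Stirling recurrence by Pascal's rule. Compositions whose
first part is `1` contribute `n F(n - 1, k - 1)`, so the inner sum on the left is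
`F(n, k) - n F(n - 1, k - 1)`; multiplied by `4 (k - 1)` this is the `k`-th summand on the right,
because `k! - (k - 1)! = (k - 1) (k - 1)!`. The extra summand `k = n` on the right vanishes since
`S(n, n) = S(n - 1, n - 1) = 1`.
-/

open Nat Finset.Nat

theorem stirling_eq_stirlingSecond : stirling = Nat.stirlingSecond := by
  funext n k
  induction n generalizing k with
  | zero => cases k <;> rfl
  | succ n ih => cases k <;> simp [stirling, stirlingSecond_succ_succ, ih]

theorem Nat.factorial_mul_stirlingSecond_succ_succ (n k : ℕ) :
    (k + 1)! * stirlingSecond (n + 1) (k + 1) =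
      (k + 1) * ((k + 1)! * stirlingSecond n (k + 1) + k ! * stirlingSecond n k) := by
  rw [stirlingSecond_succ_succ, factorial_succ]
  ring

theorem Nat.sum_antidiagonal_choose_mul_factorial_mul_stirlingSecond (n k : ℕ) :
    ∑ p ∈ antidiagonal n, n.choose p.1 * (k ! * stirlingSecond p.2 k) =
      (k + 1)! * stirlingSecond n (k + 1) + k ! * stirlingSecond n k := by
  induction n generalizing k with
  | zero => simp
  | succ n ih =>
    have hswap : ∑ p ∈ antidiagonal n, n.choose p.2 * (k ! * stirlingSecond p.2 k) =
        ∑ p ∈ antidiagonal n, n.choose p.1 * (k ! * stirlingSecond p.2 k) :=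
      sum_congr rfl fun p hp => by
        rw [choose_symm_of_eq_add (HasAntidiagonal.mem_antidiagonal.1 hp).symm]
    have hsplit := sum_antidiagonal_choose_succ_mul (fun _ j => k ! * stirlingSecond j k) n
    simp only [Nat.cast_id] at hsplit
    rw [hsplit, hswap, ih]
    rcases k with _ | k
    · simp [stirlingSecond_succ_succ]
    · simp only [factorial_mul_stirlingSecond_succ_succ, mul_left_comm _ (k + 1), ← mul_sum,
        mul_add, sum_add_distrib, ih]
      ring

theorem Nat.multinomial_univ_fin_cons {k : ℕ} (a : ℕ) (d : Fin k → ℕ) :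
    multinomial univ (Fin.cons a d : Fin (k + 1) → ℕ) =
      (a + ∑ i, d i).choose a * multinomial univ d := by
  rw [Fin.univ_succ, multinomial_cons]
  simp [multinomial, prod_map, sum_map]

theorem Finset.Nat.sum_antidiagonalTuple_succ {M : Type*} [AddCommMonoid M] (k n : ℕ)
    (f : (Fin (k + 1) → ℕ) → M) :
    ∑ c ∈ antidiagonalTuple (k + 1) n, f c =
      ∑ p ∈ antidiagonal n, ∑ d ∈ antidiagonalTuple k p.2, f (Fin.cons p.1 d) := by
  rw [sum_sigma']
  refine sum_nbij' (fun c => ⟨(c 0, ∑ i : Fin k, c i.succ), Fin.tail c⟩)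
    (fun x => Fin.cons x.1.1 x.2) ?_ ?_ (fun c _ => Fin.cons_self_tail c) ?_
    (fun c _ => by rw [Fin.cons_self_tail])
  · intro c hc
    simpa [mem_antidiagonalTuple, Fin.sum_univ_succ, Fin.tail] using hc
  · rintro ⟨⟨a, b⟩, d⟩ hx
    simp only [mem_sigma, HasAntidiagonal.mem_antidiagonal,
      mem_antidiagonalTuple] at hx
    simpa [mem_antidiagonalTuple, Fin.sum_univ_succ, hx.2] using hx.1
  · rintro ⟨⟨a, b⟩, d⟩ hx
    simp only [mem_sigma, mem_antidiagonalTuple] at hx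
    simp [hx.2]

def compositionTuples (k n : ℕ) : Finset (Fin k → ℕ) :=
  (antidiagonalTuple k n).filter fun c => ∀ i, c i ≠ 0

theorem sum_compositionTuples_succ {M : Type*} [AddCommMonoid M] (k n : ℕ)
    (f : (Fin (k + 1) → ℕ) → M) :
    ∑ c ∈ compositionTuples (k + 1) n, f c =
      ∑ p ∈ antidiagonal n with p.1 ≠ 0, ∑ d ∈ compositionTuples k p.2, f (Fin.cons p.1 d) := by
  simp only [compositionTuples, sum_filter, sum_antidiagonalTuple_succ, Fin.forall_fin_succ,
    Fin.cons_zero, Fin.cons_succ]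
  refine sum_congr rfl fun p _ => ?_
  by_cases h : p.1 = 0 <;> simp [h]

theorem sum_multinomial_compositionTuples_succ_filter (k n : ℕ) (P : ℕ → Prop)
    [DecidablePred P] :
    ∑ c ∈ compositionTuples (k + 1) n with P (c 0), multinomial univ c =
      ∑ p ∈ antidiagonal n with p.1 ≠ 0 ∧ P p.1,
        n.choose p.1 * ∑ d ∈ compositionTuples k p.2, multinomial univ d := by
  rw [sum_filter, sum_compositionTuples_succ, ← filter_filter,
    sum_filter (fun p : ℕ × ℕ => P p.1)]
  refine sum_congr rfl fun p hp => ?_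
  split_ifs with hP
  · rw [mul_sum]
    refine sum_congr rfl fun d hd => ?_
    rw [Fin.cons_zero, if_pos hP, multinomial_univ_fin_cons,
      mem_antidiagonalTuple.1 (mem_filter.1 hd).1,
      HasAntidiagonal.mem_antidiagonal.1 (mem_filter.1 hp).1]
  · simp [hP]

theorem sum_multinomial_compositionTuples (k n : ℕ) :
    ∑ c ∈ compositionTuples k n, multinomial univ c = k ! * stirlingSecond n k := by
  induction k generalizing n with
  | zero => cases n <;> simp [compositionTuples, antidiagonalTuple_zero_succ]
  | succ k ih =>
    have hhead : {p ∈ antidiagonal n | ¬p.1 ≠ 0} = {(0, n)} := by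
      ext ⟨a, b⟩
      simp only [mem_filter, HasAntidiagonal.mem_antidiagonal,
        mem_singleton, Prod.mk.injEq]
      omega
    have hsplit := sum_filter_add_sum_filter_not (antidiagonal n) (fun p => p.1 ≠ 0)
      fun p => n.choose p.1 * (k ! * stirlingSecond p.2 k)
    rw [sum_antidiagonal_choose_mul_factorial_mul_stirlingSecond, hhead, sum_singleton,
      choose_zero_right, one_mul, Nat.add_right_cancel_iff] at hsplit
    have hfirst := sum_multinomial_compositionTuples_succ_filter k n fun _ => True
    simp only [filter_true, and_true, ih] at hfirst
    rw [hfirst, hsplit]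

theorem sum_multinomial_compositionTuples_head_ne_one (k n : ℕ) :
    ∑ c ∈ compositionTuples (k + 1) n with c 0 ≠ 1, multinomial univ c +
      n * (k ! * stirlingSecond (n - 1) k) = (k + 1)! * stirlingSecond n (k + 1) := by
  have hone : ∑ c ∈ compositionTuples (k + 1) n with c 0 = 1, multinomial univ c =
      n * (k ! * stirlingSecond (n - 1) k) := by
    rw [sum_multinomial_compositionTuples_succ_filter k n (· = 1)]
    rcases n with _ | m
    · simp
    · have : {p ∈ antidiagonal (m + 1) | p.1 ≠ 0 ∧ p.1 = 1} = {(1, m)} := by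
        ext ⟨a, b⟩
        simp only [mem_filter, HasAntidiagonal.mem_antidiagonal,
          mem_singleton, Prod.mk.injEq]
        omega
      rw [this, sum_singleton, choose_one_right, sum_multinomial_compositionTuples,
        add_tsub_cancel_right]
  rw [← hone, ← sum_multinomial_compositionTuples, add_comm]
  exact sum_filter_add_sum_filter_not _ _ _

theorem composition_sum_eq_stirling_sum_general (n : ℕ) :
    ((∑ k ∈ Finset.Icc 1 (n - 1),
        ∑ c ∈ (Finset.Nat.antidiagonalTuple k n).filter
          (fun c => (∀ i : Fin k, c i ≠ 0) ∧ ∀ i : Fin k, (i : ℕ) = 0 → c i ≠ 1),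
          4 * (k - 1) * Nat.multinomial Finset.univ c : ℕ) : ℤ) =
      ∑ k ∈ Finset.Icc 1 n,
        4 * ((k.factorial : ℤ) - (k - 1).factorial) *
          ((k : ℤ) * stirling n k - (n : ℤ) * stirling (n - 1) (k - 1)) := by
  have hterm : ∀ k, 1 ≤ k →
      ((∑ c ∈ (antidiagonalTuple k n).filter
          (fun c => (∀ i : Fin k, c i ≠ 0) ∧ ∀ i : Fin k, (i : ℕ) = 0 → c i ≠ 1),
          4 * (k - 1) * multinomial univ c : ℕ) : ℤ) =
        4 * ((k ! : ℤ) - (k - 1)!) *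
          ((k : ℤ) * stirlingSecond n k - (n : ℤ) * stirlingSecond (n - 1) (k - 1)) := by
    intro k hk
    obtain ⟨j, rfl⟩ := Nat.exists_eq_add_of_le' hk
    have hfilter : (antidiagonalTuple (j + 1) n).filter
        (fun c => (∀ i : Fin (j + 1), c i ≠ 0) ∧ ∀ i : Fin (j + 1), (i : ℕ) = 0 → c i ≠ 1) =
        {c ∈ compositionTuples (j + 1) n | c 0 ≠ 1} := by
      rw [compositionTuples, filter_filter]
      simp [Fin.val_eq_zero_iff]
    have hcount := congrArg (Nat.cast : ℕ → ℤ) (sum_multinomial_compositionTuples_head_ne_one j n)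
    rw [factorial_succ] at hcount
    push_cast at hcount
    rw [hfilter, ← mul_sum, add_tsub_cancel_right, factorial_succ]
    push_cast
    linear_combination (4 * (j : ℤ)) * hcount
  rw [stirling_eq_stirlingSecond, Nat.cast_sum]
  rcases n with _ | m
  · rfl
  · rw [sum_Icc_succ_top (by omega), add_tsub_cancel_right, stirlingSecond_self,
      stirlingSecond_self]
    simpa using sum_congr rfl fun k hk => hterm k (mem_Icc.1 hk).1

theorem composition_sum_eq_stirling_sum (n : ℕ) (hn : 2 ≤ n) :
    ((∑ k ∈ Finset.Icc 1 (n - 1),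
        ∑ c ∈ (Finset.Nat.antidiagonalTuple k n).filter
          (fun c => (∀ i : Fin k, c i ≠ 0) ∧ ∀ i : Fin k, (i : ℕ) = 0 → c i ≠ 1),
          4 * (k - 1) * Nat.multinomial Finset.univ c : ℕ) : ℤ) =
      ∑ k ∈ Finset.Icc 1 n,
        4 * ((k.factorial : ℤ) - (k - 1).factorial) *
          ((k : ℤ) * stirling n k - (n : ℤ) * stirling (n - 1) (k - 1)) :=
  composition_sum_eq_stirling_sum_general n
end
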